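/- Let m ∈ ℕ. If Ω : (ℕ∖{0}) × ℤ → ℤ is a DT-exponent function for the 1×1 matrix [m+1] (the (m+1)-loop quiver), then the map (r,s) ↦ −Ω(r, 2−r−s) is a DT-exponent function for the 1×1 matrix [−m] (the (−m)-loop quiver). Equivalently, the motivic DT invariants satisfy Ω^{−m}_r(q) = −q^{2−r}·Ω^{m+1}_r(q^{−1}), where Ω^{m}_r(q) = Σ_s Ω^{m}(r,s) q^s. -/

import Mathlib

noncomputable section

/-- The base field `K = ℚ(q)`. -/
abbrev K : Type := RatFunc ℚ

/-- The variable `q` of `K = ℚ(q)`. -/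
def qq : K := RatFunc.X

/-- The finite q-Pochhammer symbol `(α; q²)_n = ∏_{k=0}^{n-1} (1 - α q^{2k})`. -/
def qPoch (α : K) (n : ℕ) : K := ∏ k ∈ Finset.range n, (1 - α * qq ^ (2 * k))

/-- The quadratic form `dᵀ C d` of an integer matrix on a dimension vector. -/
def quadForm {N : ℕ} (C : Matrix (Fin N) (Fin N) ℤ) (d : Fin N → ℕ) : ℤ :=
  ∑ i, ∑ j, C i j * (d i : ℤ) * (d j : ℤ)

/-- The coefficient of `x^d` in the motivic generating series of the extended
symmetric quiver with adjacency matrix `C`: `(-q)^{dᵀCd} / ∏ᵢ (q²;q²)_{dᵢ}`. -/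
def Pcoeff {N : ℕ} (C : Matrix (Fin N) (Fin N) ℤ) (d : Fin N → ℕ) : K :=
  (-qq) ^ quadForm C d / ∏ i, qPoch (qq ^ 2) (d i)

/-- The motivic generating series `P_C ∈ K[[x_1,…,x_N]]`. -/
def Pser {N : ℕ} (C : Matrix (Fin N) (Fin N) ℤ) : MvPowerSeries (Fin N) K :=
  fun d => Pcoeff C (fun i => d i)

open Classical in
/-- Formal expansion of the infinite q-Pochhammer `(q^s x^d ; q²)_∞`:
its coefficient at `j • d` is `(-1)^j q^{j(j-1)+js} / (q²;q²)_j`, and all other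
coefficients vanish. -/
def Poch {N : ℕ} (d : Fin N →₀ ℕ) (s : ℤ) : MvPowerSeries (Fin N) K :=
  fun e =>
    if h : ∃ j : ℕ, e = j • d then
      (-1 : K) ^ h.choose *
        qq ^ ((h.choose : ℤ) * ((h.choose : ℤ) - 1) + (h.choose : ℤ) * s) /
        qPoch (qq ^ 2) h.choose
    else 0

lemma qPoch_zero (α : K) : qPoch α 0 = 1 := by simp [qPoch]

lemma constantCoeff_Poch {N : ℕ} {d : Fin N →₀ ℕ} (hd : d ≠ 0) (s : ℤ) :
    MvPowerSeries.constantCoeff (Poch d s) = 1 := by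
  have h : ∃ j : ℕ, (0 : Fin N →₀ ℕ) = j • d := ⟨0, by simp⟩
  have hc : h.choose = 0 := by
    by_contra hc
    obtain ⟨x, hx⟩ := Finsupp.ne_iff.mp hd
    have hs := h.choose_spec
    have hx0 : (0 : Fin N →₀ ℕ) x = (h.choose • d) x := by rw [← hs]
    simp only [Finsupp.coe_zero, Pi.zero_apply, Finsupp.smul_apply, smul_eq_mul] at hx0
    rcases Nat.mul_eq_zero.mp hx0.symm with h1 | h2
    · exact hc h1
    · simp at hx; exact hx h2
  have h0 : MvPowerSeries.constantCoeff (Poch d s) = Poch d s 0 := rfl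
  rw [h0]
  unfold Poch
  rw [dif_pos h, hc]
  simp [qPoch_zero]

lemma isUnit_Poch {N : ℕ} {d : Fin N →₀ ℕ} (hd : d ≠ 0) (s : ℤ) :
    IsUnit (Poch d s) := by
  rw [MvPowerSeries.isUnit_iff_constantCoeff, constantCoeff_Poch hd s]
  exact isUnit_one

/-- `Poch d s` as an element of the unit group of `K[[x_1,…,x_N]]` (for `d ≠ 0`). -/
def PochUnit {N : ℕ} (d : Fin N →₀ ℕ) (hd : d ≠ 0) (s : ℤ) : (MvPowerSeries (Fin N) K)ˣ :=
  (isUnit_Poch hd s).unit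

open Classical in
/-- The product `∏_{0 < |d| ≤ n} ∏_s Poch(d,s)^{Ω(d,s)}`, taken in the unit group of
`K[[x_1,…,x_N]]` (integer powers allowed). -/
def DTProd {N : ℕ} (Ω : (Fin N →₀ ℕ) → ℤ → ℤ) (n : ℕ) : (MvPowerSeries (Fin N) K)ˣ :=
  ∏ᶠ (d : Fin N →₀ ℕ) (s : ℤ),
    if h : d ≠ 0 ∧ (d.sum fun _ c => c) ≤ n then PochUnit d h.1 s ^ Ω d s else 1

/-- `Ω` is a DT-exponent function for `C`: for every `d ≠ 0` only finitely many `Ω d s`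
are nonzero, and for every `n` the coefficients of `P_C` and of the finite product
`∏_{0<|d|≤n} ∏_{s} Poch(d,s)^{Ω(d,s)}` agree on all monomials of total degree `≤ n`.
The values `Ω d s` are the motivic Donaldson–Thomas invariants of `C`. -/
def IsDTExponent {N : ℕ} (C : Matrix (Fin N) (Fin N) ℤ) (Ω : (Fin N →₀ ℕ) → ℤ → ℤ) : Prop :=
  (∀ d : Fin N →₀ ℕ, d ≠ 0 → (Function.support (Ω d)).Finite) ∧
  ∀ n : ℕ, ∀ d : Fin N →₀ ℕ, (d.sum fun _ c => c) ≤ n →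
    MvPowerSeries.coeff d (Pser C) = MvPowerSeries.coeff d ↑(DTProd Ω n)


/-!
The map `qInvRescale` (apply `q ↦ q⁻¹` to the coefficients, then substitute `xᵢ ↦ q⁻¹ xᵢ`) is an
injective ring endomorphism of `K⟦x₁,…,x_N⟧`. Since `q ↦ q⁻¹` turns `(q²;q²)ₙ` into
`(-q)^{-n²} q^{-n} (q²;q²)ₙ`, it maps `P_C` to `P_{1-C}`. It maps `(q^s x^d;q²)_∞` to
`e(q^{2-|d|-s} x^d)`, where `e(y) = ∑ yʲ/(q²;q²)ⱼ` is Euler's q-exponential, and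
`e(y) (y;q²)_∞ = 1`: both `(1-y) e(y) = e(q²y)` and `(y;q²)_∞ = (1-y) (q²y;q²)_∞` hold, so the
product is invariant under `y ↦ q²y`, hence constant. Applying `qInvRescale` to a DT
factorisation of `P_C` therefore yields one of `P_{1-C}` with exponents `-Ω(d, 2-|d|-s)`, and
`1 - [m+1] = [-m]`.
-/

lemma transcendental_qq : Transcendental ℚ qq := by
  -- `RatFunc ℚ` has its own `ℚ`-algebra instance, equal to the canonical one only propositionally
  convert RatFunc.transcendental_X (K := ℚ)
  · exact Subsingleton.elim _ _
  · rfl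

lemma qq_ne_zero : qq ≠ 0 := RatFunc.X_ne_zero

lemma qq_pow_ne_one {n : ℕ} (hn : n ≠ 0) : qq ^ n ≠ 1 := fun h =>
  transcendental_qq (IsAlgebraic.of_pow (Nat.pos_of_ne_zero hn) (h ▸ isAlgebraic_one))

lemma one_sub_qq_pow_ne_zero {n : ℕ} (hn : n ≠ 0) : 1 - qq ^ n ≠ 0 :=
  sub_ne_zero.mpr (qq_pow_ne_one hn).symm

lemma qPoch_succ (α : K) (n : ℕ) : qPoch α (n + 1) = qPoch α n * (1 - α * qq ^ (2 * n)) :=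
  Finset.prod_range_succ _ _

lemma qPoch_sq_succ (n : ℕ) :
    qPoch (qq ^ 2) (n + 1) = qPoch (qq ^ 2) n * (1 - qq ^ (2 * n + 2)) := by
  rw [qPoch_succ, ← pow_add, add_comm]

lemma qPoch_sq_ne_zero (n : ℕ) : qPoch (qq ^ 2) n ≠ 0 :=
  Finset.prod_ne_zero_iff.mpr fun _ _ => by
    rw [← pow_add]; exact one_sub_qq_pow_ne_zero (by omega)

lemma aeval_qq_inv_injective : Function.Injective (Polynomial.aeval (R := ℚ) qq⁻¹) :=
  transcendental_iff_injective.mp fun h => transcendental_qq (IsAlgebraic.inv_iff.mp h)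

def qInv : K →+* K :=
  RatFunc.liftRingHom (Polynomial.aeval qq⁻¹).toRingHom
    (nonZeroDivisors_le_comap_nonZeroDivisors_of_injective _ aeval_qq_inv_injective)

lemma qInv_qq : qInv qq = qq⁻¹ := by
  have h := RatFunc.liftRingHom_apply_div (Polynomial.aeval qq⁻¹).toRingHom
    (nonZeroDivisors_le_comap_nonZeroDivisors_of_injective _ aeval_qq_inv_injective)
    Polynomial.X 1
  rw [map_one, div_one, RatFunc.algebraMap_X, map_one, div_one] at h
  exact h.trans (Polynomial.aeval_X _)

lemma qInv_qPoch_mul (n : ℕ) :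
    qInv (qPoch (qq ^ 2) n) * ((-qq) ^ (n ^ 2) * qq ^ n) = qPoch (qq ^ 2) n := by
  induction n with
  | zero => simp [qPoch_zero]
  | succ n ih =>
    have hodd : (-qq) ^ (2 * n + 1) = -qq ^ (2 * n + 1) := Odd.neg_pow ⟨n, rfl⟩ _
    rw [qPoch_sq_succ, map_mul, map_sub, map_one, map_pow, qInv_qq]
    generalize qInv (qPoch (qq ^ 2) n) = σP at ih ⊢
    rw [← ih, show (n + 1) ^ 2 = n ^ 2 + (2 * n + 1) by ring, pow_add (-qq), hodd]
    simp only [inv_pow]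
    field_simp [qq_ne_zero]
    ring

lemma qInv_qPoch (n : ℕ) :
    qInv (qPoch (qq ^ 2) n) = qPoch (qq ^ 2) n / ((-qq) ^ (n ^ 2) * qq ^ n) := by
  rw [eq_div_iff (by simp [qq_ne_zero]), qInv_qPoch_mul]

lemma qInv_prod_qPoch {N : ℕ} (d : Fin N →₀ ℕ) :
    qInv (∏ i, qPoch (qq ^ 2) (d i)) =
      (∏ i, qPoch (qq ^ 2) (d i)) / ((-qq) ^ (∑ i, d i ^ 2) * qq ^ d.degree) := by
  rw [map_prod, Finset.prod_congr rfl fun i _ => qInv_qPoch (d i), Finset.prod_div_distrib,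
    Finset.prod_mul_distrib, Finset.prod_pow_eq_pow_sum, Finset.prod_pow_eq_pow_sum,
    Finsupp.degree_eq_sum]

lemma Finsupp.nsmul_left_injective {σ : Type*} {d : σ →₀ ℕ} (hd : d ≠ 0) :
    Function.Injective (· • d : ℕ → σ →₀ ℕ) := by
  obtain ⟨i, hi⟩ := Finsupp.ne_iff.mp hd
  intro j k h
  exact (by simpa using DFunLike.congr_fun h i : j = k ∨ d i = 0).resolve_right
    (by simpa using hi)

namespace PowerSeries

variable {σ R : Type*} [CommRing R]

lemma coeff_succ_one_sub_X_mul (f : PowerSeries R) (n : ℕ) :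
    coeff (n + 1) ((1 - X) * f) = coeff (n + 1) f - coeff n f := by
  rw [sub_mul, one_mul, map_sub, coeff_succ_X_mul]

lemma coeff_zero_one_sub_X_mul (f : PowerSeries R) : coeff 0 ((1 - X) * f) = coeff 0 f := by
  simp [sub_mul]

lemma eq_C_of_rescale_eq [NoZeroDivisors R] {a : R} (ha : ∀ n ≠ 0, a ^ n ≠ 1) {f : PowerSeries R}
    (hf : rescale a f = f) : f = C (constantCoeff f) := by
  ext (_ | n)
  · simp
  · have h := congrArg (coeff (n + 1)) hf
    rw [coeff_rescale] at h
    rw [coeff_C, if_neg n.succ_ne_zero]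
    exact (mul_eq_zero.mp (by linear_combination h : (a ^ (n + 1) - 1) * _ = 0)).resolve_left
      (sub_ne_zero.mpr (ha _ n.succ_ne_zero))

def substMonomial (d : σ →₀ ℕ) (f : PowerSeries R) : MvPowerSeries σ R :=
  f.subst (MvPowerSeries.monomial d (1 : R))

variable {d : σ →₀ ℕ}

lemma coeff_substMonomial (hd : d ≠ 0) (f : PowerSeries R) (e : σ →₀ ℕ) :
    MvPowerSeries.coeff e (substMonomial d f) =
      ∑ᶠ j, coeff j f • MvPowerSeries.coeff e (MvPowerSeries.monomial (j • d) (1 : R)) := by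
  classical
  rw [substMonomial, coeff_subst (HasSubst.monomial hd 1)]
  simp_rw [MvPowerSeries.monomial_pow, one_pow]

lemma coeff_nsmul_substMonomial (hd : d ≠ 0) (f : PowerSeries R) (j : ℕ) :
    MvPowerSeries.coeff (j • d) (substMonomial d f) = coeff j f := by
  classical
  rw [coeff_substMonomial hd, finsum_eq_single _ j]
  · simp
  · intro k hk
    rw [MvPowerSeries.coeff_monomial, if_neg fun h => hk (Finsupp.nsmul_left_injective hd h).symm,
      smul_zero]

lemma coeff_substMonomial_eq_zero (hd : d ≠ 0) (f : PowerSeries R) {e : σ →₀ ℕ}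
    (he : ∀ j : ℕ, e ≠ j • d) : MvPowerSeries.coeff e (substMonomial d f) = 0 := by
  classical
  rw [coeff_substMonomial hd]
  simp [MvPowerSeries.coeff_monomial, he]

lemma substMonomial_mul (hd : d ≠ 0) (f g : PowerSeries R) :
    substMonomial d (f * g) = substMonomial d f * substMonomial d g :=
  subst_mul (HasSubst.monomial hd 1) f g

lemma substMonomial_one (hd : d ≠ 0) : substMonomial d (1 : PowerSeries R) = 1 := by
  rw [substMonomial, ← coe_substAlgHom (HasSubst.monomial hd 1), map_one]

end PowerSeries

open PowerSeries

def qExp : PowerSeries K := mk fun j => (qPoch (qq ^ 2) j)⁻¹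

def qPochInf : PowerSeries K :=
  mk fun j => (-1) ^ j * qq ^ ((j : ℤ) * ((j : ℤ) - 1)) / qPoch (qq ^ 2) j

lemma one_sub_X_mul_qExp : (1 - X) * qExp = rescale (qq ^ 2) qExp := by
  ext (_ | n)
  · simp [coeff_zero_one_sub_X_mul, qExp]
  · have := qPoch_sq_ne_zero n
    have := one_sub_qq_pow_ne_zero (n := 2 * n + 2) (by omega)
    rw [coeff_succ_one_sub_X_mul, coeff_rescale, qExp, coeff_mk, coeff_mk, qPoch_sq_succ]
    field_simp
    ring

lemma qPochInf_eq_one_sub_X_mul : qPochInf = (1 - X) * rescale (qq ^ 2) qPochInf := by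
  ext (_ | n)
  · simp [coeff_zero_one_sub_X_mul, qPochInf]
  · have := qPoch_sq_ne_zero n
    have := one_sub_qq_pow_ne_zero (n := 2 * n + 2) (by omega)
    have hexp : qq ^ (((n + 1 : ℕ) : ℤ) * (((n + 1 : ℕ) : ℤ) - 1))
        = qq ^ (2 * n) * qq ^ ((n : ℤ) * ((n : ℤ) - 1)) := by
      rw [← zpow_natCast, ← zpow_add₀ qq_ne_zero]; push_cast; ring_nf
    rw [coeff_succ_one_sub_X_mul, coeff_rescale, coeff_rescale, qPochInf, coeff_mk, coeff_mk,
      qPoch_sq_succ, hexp]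
    field_simp
    ring

theorem qExp_mul_qPochInf : qExp * qPochInf = 1 := by
  have hX : (1 - X : PowerSeries K) ≠ 0 := fun h => by simpa using congrArg (coeff 0) h
  have hfix : rescale (qq ^ 2) (qExp * qPochInf) = qExp * qPochInf := by
    apply mul_left_cancel₀ hX
    calc (1 - X) * rescale (qq ^ 2) (qExp * qPochInf)
        = rescale (qq ^ 2) qExp * ((1 - X) * rescale (qq ^ 2) qPochInf) := by
          rw [map_mul]; ring
      _ = (1 - X) * (qExp * qPochInf) := by
          rw [← qPochInf_eq_one_sub_X_mul, ← one_sub_X_mul_qExp, mul_assoc]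
  rw [eq_C_of_rescale_eq (fun n hn => by rw [← pow_mul]; exact qq_pow_ne_one (by omega)) hfix]
  simp [qExp, qPochInf, qPoch_zero]

lemma map_qInv_qPochInf : qPochInf.map qInv = rescale (qq ^ 2) qExp := by
  ext j
  have hsign : (-1 : K) ^ j * (-1) ^ (j ^ 2) = 1 := by
    rw [← pow_add, show j + j ^ 2 = j * (j + 1) by ring, (Nat.even_mul_succ_self j).neg_one_pow]
  have hq : qq ^ (-((j : ℤ) * ((j : ℤ) - 1))) * (qq ^ (j ^ 2) * qq ^ j) = (qq ^ 2) ^ j := by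
    rw [← pow_add, ← pow_mul, ← zpow_natCast, ← zpow_natCast, ← zpow_add₀ qq_ne_zero]
    push_cast; ring_nf
  rw [coeff_map, coeff_rescale, qPochInf, qExp, coeff_mk, coeff_mk, map_div₀, map_mul, map_pow,
    map_neg, map_one, map_zpow₀, qInv_qq, qInv_qPoch, inv_zpow', neg_pow, div_div_eq_mul_div]
  linear_combination
    (qq ^ (-((j : ℤ) * ((j : ℤ) - 1))) * qq ^ (j ^ 2) * qq ^ j / qPoch (qq ^ 2) j) * hsign
      + (qPoch (qq ^ 2) j)⁻¹ * hq

def qInvRescale {ι : Type*} : MvPowerSeries ι K →+* MvPowerSeries ι K :=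
  (MvPowerSeries.rescale fun _ => qq⁻¹).comp (MvPowerSeries.map qInv)

section qInvRescale

variable {ι : Type*}

lemma coeff_qInvRescale (f : MvPowerSeries ι K) (e : ι →₀ ℕ) :
    MvPowerSeries.coeff e (qInvRescale f) = qq⁻¹ ^ e.degree * qInv (MvPowerSeries.coeff e f) := by
  simp [qInvRescale, MvPowerSeries.coeff_rescale, Finsupp.prod, Finsupp.degree_apply,
    Finset.prod_pow_eq_pow_sum]

lemma qInvRescale_injective : Function.Injective (qInvRescale (ι := ι)) := fun f g h => by
  ext e
  simpa [coeff_qInvRescale, qq_ne_zero, qInv.injective.eq_iff] using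
    congrArg (MvPowerSeries.coeff e) h

lemma qInvRescale_substMonomial {d : ι →₀ ℕ} (hd : d ≠ 0) (f : PowerSeries K) :
    qInvRescale (substMonomial d f) = substMonomial d (rescale (qq⁻¹ ^ d.degree) (f.map qInv)) := by
  ext e
  by_cases he : ∃ j : ℕ, e = j • d
  · obtain ⟨j, rfl⟩ := he
    rw [coeff_qInvRescale, coeff_nsmul_substMonomial hd, coeff_nsmul_substMonomial hd,
      coeff_rescale, coeff_map, map_nsmul, smul_eq_mul, mul_comm j, pow_mul]
  · rw [coeff_qInvRescale, coeff_substMonomial_eq_zero hd _ (not_exists.mp he),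
      coeff_substMonomial_eq_zero hd _ (not_exists.mp he), map_zero, mul_zero]

end qInvRescale

section Poch

variable {N : ℕ} {d : Fin N →₀ ℕ}

lemma Poch_eq_substMonomial (hd : d ≠ 0) (s : ℤ) :
    Poch d s = substMonomial d (rescale (qq ^ s) qPochInf) := by
  ext e
  by_cases he : ∃ j : ℕ, e = j • d
  · obtain ⟨j, rfl⟩ := he
    have h : ∃ i : ℕ, j • d = i • d := ⟨j, rfl⟩
    rw [coeff_nsmul_substMonomial hd, coeff_rescale, qPochInf, coeff_mk,
      MvPowerSeries.coeff_apply, Poch, dif_pos h, ← Finsupp.nsmul_left_injective hd h.choose_spec,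
      zpow_add₀ qq_ne_zero, ← zpow_natCast (qq ^ s), ← zpow_mul, mul_comm s]
    ring
  · rw [coeff_substMonomial_eq_zero hd _ (not_exists.mp he), MvPowerSeries.coeff_apply, Poch,
      dif_neg he]

lemma qInvRescale_Poch (hd : d ≠ 0) (s : ℤ) :
    qInvRescale (Poch d s) = substMonomial d (rescale (qq ^ (2 - (d.degree : ℤ) - s)) qExp) := by
  rw [Poch_eq_substMonomial hd, qInvRescale_substMonomial hd, ← rescale_map, map_qInv_qPochInf,
    rescale_rescale, rescale_rescale, map_zpow₀, qInv_qq]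
  congr 2
  rw [inv_zpow', inv_pow, ← zpow_natCast qq 2, ← zpow_natCast qq d.degree, ← zpow_neg,
    ← zpow_add₀ qq_ne_zero, ← zpow_add₀ qq_ne_zero]
  ring_nf

lemma qInvRescale_Poch_mul_Poch (hd : d ≠ 0) (s : ℤ) :
    qInvRescale (Poch d s) * Poch d (2 - (d.degree : ℤ) - s) = 1 := by
  rw [qInvRescale_Poch hd, Poch_eq_substMonomial hd, ← substMonomial_mul hd, ← map_mul,
    qExp_mul_qPochInf, map_one, substMonomial_one hd]

lemma units_map_qInvRescale_PochUnit (hd : d ≠ 0) (s : ℤ) :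
    Units.map qInvRescale.toMonoidHom (PochUnit d hd s) = (PochUnit d hd (2 - d.degree - s))⁻¹ :=
  eq_inv_of_mul_eq_one_left (Units.ext (qInvRescale_Poch_mul_Poch hd s))

end Poch

lemma quadForm_one_sub {N : ℕ} (C : Matrix (Fin N) (Fin N) ℤ) (d : Fin N → ℕ) :
    quadForm (1 - C) d = ∑ i, (d i : ℤ) ^ 2 - quadForm C d := by
  simp [quadForm, Matrix.sub_apply, Matrix.one_apply, sub_mul, ite_mul, sq]

lemma qInvRescale_Pser {N : ℕ} (C : Matrix (Fin N) (Fin N) ℤ) :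
    qInvRescale (Pser C) = Pser (1 - C) := by
  ext e
  have := Finset.prod_ne_zero_iff.mpr fun i (_ : i ∈ Finset.univ) => qPoch_sq_ne_zero (e i)
  rw [coeff_qInvRescale]
  change qq⁻¹ ^ _ * qInv (Pcoeff C _) = Pcoeff (1 - C) _
  rw [Pcoeff, Pcoeff, quadForm_one_sub, map_div₀, map_zpow₀, map_neg, qInv_qq, neg_inv,
    inv_zpow, qInv_prod_qPoch, zpow_sub₀ (neg_ne_zero.mpr qq_ne_zero),
    show ∑ i, (e i : ℤ) ^ 2 = ((∑ i, e i ^ 2 : ℕ) : ℤ) by push_cast; rfl, zpow_natCast, inv_pow]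
  field_simp [qq_ne_zero]

lemma units_map_qInvRescale_DTProd {N : ℕ} (Ω : (Fin N →₀ ℕ) → ℤ → ℤ) (n : ℕ) :
    Units.map qInvRescale.toMonoidHom (DTProd Ω n) =
      DTProd (fun d s => -Ω d (2 - (d.degree : ℤ) - s)) n := by
  have hinj : Function.Injective (Units.map (qInvRescale (ι := Fin N)).toMonoidHom) :=
    fun _ _ h => Units.ext (qInvRescale_injective (congrArg Units.val h))
  rw [DTProd, DTProd, MonoidHom.map_finprod_of_injective _ hinj]
  refine finprod_congr fun d => ?_
  rw [MonoidHom.map_finprod_of_injective _ hinj]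
  by_cases h : d ≠ 0 ∧ (d.sum fun _ c => c) ≤ n
  · simp only [dif_pos h, map_zpow, units_map_qInvRescale_PochUnit h.1, inv_zpow']
    rw [← finprod_comp_equiv (Equiv.subLeft (2 - (d.degree : ℤ)))]
    simp [sub_sub_cancel]
  · simp only [dif_neg h, map_one]

theorem IsDTExponent.one_sub {N : ℕ} {C : Matrix (Fin N) (Fin N) ℤ}
    {Ω : (Fin N →₀ ℕ) → ℤ → ℤ} (h : IsDTExponent C Ω) :
    IsDTExponent (1 - C) (fun d s => -Ω d (2 - (d.degree : ℤ) - s)) := by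
  obtain ⟨hfin, hcoeff⟩ := h
  refine ⟨fun d hd => ?_, fun n d hdn => ?_⟩
  · have hsupp : Function.support (fun s => -Ω d (2 - (d.degree : ℤ) - s)) =
        (2 - (d.degree : ℤ) - ·) ⁻¹' Function.support (Ω d) := by
      ext; simp
    exact hsupp ▸ (hfin d hd).preimage sub_right_injective.injOn
  · rw [← qInvRescale_Pser, ← units_map_qInvRescale_DTProd, Units.coe_map,
      RingHom.toMonoidHom_eq_coe, MonoidHom.coe_coe, coeff_qInvRescale, coeff_qInvRescale,
      hcoeff n d hdn]

/-- **Lemma 2.6 (DT form, Eq. (2.16)):** if `Ω` is a DT-exponent function for the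
`(m+1)`-loop quiver, then `(r,s) ↦ −Ω(r, 2−r−s)` is a DT-exponent function for the
`(−m)`-loop quiver; equivalently `Ω^{−m}_r(q) = −q^{2−r}·Ω^{m+1}_r(q^{−1})`. -/
theorem statement5 (m : ℕ) (Ω : (Fin 1 →₀ ℕ) → ℤ → ℤ)
    (hΩ : IsDTExponent !![(m : ℤ) + 1] Ω) :
    IsDTExponent !![-(m : ℤ)] (fun d s => -Ω d (2 - (d 0 : ℤ) - s)) := by
  have hC : !![-(m : ℤ)] = 1 - !![(m : ℤ) + 1] := by
    ext i j; fin_cases i; fin_cases j; simp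
  have hdeg (d : Fin 1 →₀ ℕ) : d.degree = d 0 := by simp [Finsupp.degree_eq_sum]
  simpa only [hC, hdeg] using hΩ.one_sub

end
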